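/- Let R be a v-Marot ring with total quotient ring T, H = R^•, Q = q(H). If I is a regular fractional divisorial ideal of R, then (R :_T I)^• = (H :_Q I^•), and for every nonempty H-fractional subset 𝔞 ⊆ Q one has (𝔞_{v_R})^• = 𝔞_{v_H}. -/

import Mathlib

open scoped Pointwise

/-- For subsets `Z, X` of the total quotient ring `T`, the colon set
`(Z : X) = {a ∈ T | a X ⊆ Z}`. -/
def colonSet (T : Type*) [CommRing T] (Z X : Set T) : Set T :=
  {a : T | ∀ x ∈ X, a * x ∈ Z}

/-- The image of `R` inside its total quotient ring `T`. -/
def ringSet (R T : Type*) [CommRing R] [CommRing T] [Algebra R T] : Set T :=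
  Set.range (algebraMap R T)

/-- `X⁻¹ = (R : X)` for a subset `X ⊆ T`. -/
def invSet (R T : Type*) [CommRing R] [CommRing T] [Algebra R T] (X : Set T) : Set T :=
  colonSet T (ringSet R T) X

/-- The divisorial (v-) closure `X_v = (X⁻¹)⁻¹` of a subset `X ⊆ T`. -/
def vSet (R T : Type*) [CommRing R] [CommRing T] [Algebra R T] (X : Set T) : Set T :=
  invSet R T (invSet R T X)

/-- The set of regular elements (non-zero-divisors) of `T`. -/
def regSet (T : Type*) [CommRing T] : Set T :=
  {t : T | t ∈ nonZeroDivisors T}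

/-- The colon set computed inside `Q = T^• ` : `(Z :_Q X) = {a ∈ Q | a X ⊆ Z}`. -/
def colonQ (T : Type*) [CommRing T] (Z X : Set T) : Set T :=
  {a : T | a ∈ nonZeroDivisors T ∧ ∀ x ∈ X, a * x ∈ Z}

/-- The monoid `H = R^•` of regular elements of `R`, viewed inside `T`. -/
def HSet (R T : Type*) [CommRing R] [CommRing T] [Algebra R T] : Set T :=
  ringSet R T ∩ regSet T

/-- The v-closure of a subset of `Q = T^•` with respect to the monoid `H = R^•`. -/
def vMon (R T : Type*) [CommRing R] [CommRing T] [Algebra R T] (X : Set T) : Set T :=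
  colonQ T (HSet R T) (colonQ T (HSet R T) X)

/-- `X ⊆ T` is `R`-fractional: `cX ⊆ R` for some regular `c ∈ R^•`. -/
def isFrac (R T : Type*) [CommRing R] [CommRing T] [Algebra R T] (X : Set T) : Prop :=
  ∃ c : R, c ∈ nonZeroDivisors R ∧ ∀ x ∈ X, algebraMap R T c * x ∈ ringSet R T

/-- The complete integral closure `R̂` of `R` in `T`. -/
def hatSet (R T : Type*) [CommRing R] [CommRing T] [Algebra R T] : Set T :=
  {x : T | ∃ c : R, c ∈ nonZeroDivisors R ∧
    ∀ n : ℕ, 1 ≤ n → algebraMap R T c * x ^ n ∈ ringSet R T}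

/-- The complete integral closure `Ĥ` of the monoid `H = R^•` in `q(H) = T^•`. -/
def monHat (R T : Type*) [CommRing R] [CommRing T] [Algebra R T] : Set T :=
  {x : T | x ∈ nonZeroDivisors T ∧
    ∃ c ∈ HSet R T, ∀ n : ℕ, 1 ≤ n → c * x ^ n ∈ HSet R T}

/-- `R` is a v-Marot ring: every regular fractional divisorial ideal is
v-generated by its regular elements. -/
def isVMarot (R T : Type*) [CommRing R] [CommRing T] [Algebra R T] : Prop :=
  ∀ I : Set T, (I ∩ regSet T).Nonempty → isFrac R T I → vSet R T I = I →
    I = vSet R T (I ∩ regSet T)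

/-!
Part 1: for a divisorial `I`, the v-Marot property gives `I = (I^•)_v`, and since `X ↦ X⁻¹`
does not change under v-closure, `I⁻¹ = (I^•)⁻¹`; on regular elements the ring colon
`(R : I^•)` and the monoid colon `(H : I^•)` agree.

Part 2: `𝔞⁻¹` is a regular, fractional (via `c ∈ H` with `c𝔞 ⊆ H`) divisorial ideal, so
Part 1 applied to `I = 𝔞⁻¹` turns `𝔞_{v_H} = (H : (H : 𝔞)) = (H : (𝔞⁻¹)^•)` into
`(𝔞⁻¹)⁻¹ ∩ T^• = (𝔞_{v_R})^•`.
-/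

section Colon

variable {R T : Type*} [CommRing R] [CommRing T] [Algebra R T]

lemma invSet_antitone {X Y : Set T} (h : X ⊆ Y) : invSet R T Y ⊆ invSet R T X :=
  fun _ ha x hx => ha x (h hx)

lemma subset_vSet (X : Set T) : X ⊆ vSet R T X :=
  fun x hx _ hb => mul_comm x _ ▸ hb x hx

lemma invSet_vSet (X : Set T) : invSet R T (vSet R T X) = invSet R T X :=
  (invSet_antitone (subset_vSet X)).antisymm (subset_vSet (invSet R T X))

lemma vSet_invSet (X : Set T) : vSet R T (invSet R T X) = invSet R T X :=
  invSet_vSet X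

lemma colonQ_HSet_eq_invSet_inter_regSet {X : Set T} (hX : X ⊆ regSet T) :
    colonQ T (HSet R T) X = invSet R T X ∩ regSet T := by
  ext a
  exact ⟨fun ⟨ha, haX⟩ => ⟨fun x hx => (haX x hx).1, ha⟩,
    fun ⟨haX, ha⟩ => ⟨ha, fun x hx =>
      ⟨haX x hx, (mul_mem ha (hX hx) : a * x ∈ nonZeroDivisors T)⟩⟩⟩

lemma invSet_inter_regSet_eq_colonQ {I : Set T} (hI : vSet R T (I ∩ regSet T) = I) :
    invSet R T I ∩ regSet T = colonQ T (HSet R T) (I ∩ regSet T) := by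
  rw [colonQ_HSet_eq_invSet_inter_regSet Set.inter_subset_right, ← invSet_vSet (I ∩ regSet T),
    hI]

lemma isFrac_invSet (hinj : Function.Injective (algebraMap R T)) {𝔞 : Set T}
    (hne : 𝔞.Nonempty) {c : T} (hc : c ∈ ringSet R T) (hc𝔞 : ∀ x ∈ 𝔞, c * x ∈ HSet R T) :
    isFrac R T (invSet R T 𝔞) := by
  obtain ⟨x₀, hx₀⟩ := hne
  obtain ⟨⟨d, hd⟩, hd_reg⟩ := hc𝔞 x₀ hx₀
  refine ⟨d, mem_nonZeroDivisors_of_injective hinj (hd ▸ hd_reg), fun b hb => ?_⟩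
  obtain ⟨r, hr⟩ := hb x₀ hx₀
  obtain ⟨s, hs⟩ := hc
  exact ⟨s * r, by rw [map_mul, hs, hr, hd]; ring⟩

end Colon

theorem stmt14 (R T : Type*) [CommRing R] [CommRing T] [Algebra R T] [IsFractionRing R T]
    (hM : isVMarot R T) :
    (∀ I : Set T, (I ∩ regSet T).Nonempty → isFrac R T I → vSet R T I = I →
        colonSet T (ringSet R T) I ∩ regSet T = colonQ T (HSet R T) (I ∩ regSet T)) ∧
      (∀ 𝔞 : Set T, 𝔞 ⊆ regSet T → 𝔞.Nonempty →
        (∃ c ∈ HSet R T, ∀ x ∈ 𝔞, c * x ∈ HSet R T) →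
        vSet R T 𝔞 ∩ regSet T = vMon R T 𝔞) := by
  have colon_eq : ∀ I : Set T, (I ∩ regSet T).Nonempty → isFrac R T I → vSet R T I = I →
      invSet R T I ∩ regSet T = colonQ T (HSet R T) (I ∩ regSet T) :=
    fun I hreg hfrac hdiv => invSet_inter_regSet_eq_colonQ (hM I hreg hfrac hdiv).symm
  refine ⟨colon_eq, fun 𝔞 h𝔞 hne ⟨c, hcH, hc𝔞⟩ => ?_⟩
  have hc_inv : c ∈ invSet R T 𝔞 := fun x hx => (hc𝔞 x hx).1
  have hB := colon_eq (invSet R T 𝔞) ⟨c, hc_inv, hcH.2⟩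
    (isFrac_invSet (IsFractionRing.injective R T) hne hcH.1 hc𝔞) (vSet_invSet 𝔞)
  rw [vMon, colonQ_HSet_eq_invSet_inter_regSet h𝔞, ← hB]
  rfl
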